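/- (Proposition 2.3) Let x, y, x' ∈ X_pq be stationary configurations with x ≺ y ≺ x'. Suppose there exist solutions γ⁻, γ⁺ : ℝ → X_pq of the gradient flow (heteroclinic connections of the minimaximizer y with the minimizers x and x') such that for every k ∈ ℤ: γ⁻(t)_k → y_k as t → -∞ and γ⁻(t)_k → x_k as t → +∞, and γ⁺(t)_k → y_k as t → -∞ and γ⁺(t)_k → x'_k as t → +∞. Then every stationary z ∈ X_pq with x ≤ z ≤ y satisfies z = x or z = y, and every stationary z ∈ X_pq with y ≤ z ≤ x' satisfies z = y or z = x'. In other words, no stationary state lies in the order intervals [x,y] and [y,x'] other than their endpoints. -/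

import Mathlib

open Filter

/-- First partial derivative of the generating function. -/
noncomputable def pd1 (h : ℝ → ℝ → ℝ) (a b : ℝ) : ℝ := deriv (fun s => h s b) a

/-- Second partial derivative of the generating function. -/
noncomputable def pd2 (h : ℝ → ℝ → ℝ) (a b : ℝ) : ℝ := deriv (fun s => h a s) b

/-- Mixed second partial derivative ∂₁∂₂h. -/
noncomputable def pd12 (h : ℝ → ℝ → ℝ) (a b : ℝ) : ℝ := deriv (fun s => pd2 h s b) a

/-- The space of (p,q)-configurations: x (n+q) = x n + p. -/
def IsConfig (p : ℤ) (q : ℕ) (x : ℤ → ℝ) : Prop := ∀ n : ℤ, x (n + (q : ℤ)) = x n + (p : ℝ)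

/-- Stationary configuration: the gradient of the action vanishes. -/
def Stationary (h : ℝ → ℝ → ℝ) (x : ℤ → ℝ) : Prop :=
  ∀ k : ℤ, pd2 h (x (k - 1)) (x k) + pd1 h (x k) (x (k + 1)) = 0

/-- A solution of the gradient flow of the periodic action on a set I ⊆ ℝ. -/
def IsGradSol (h : ℝ → ℝ → ℝ) (p : ℤ) (q : ℕ) (I : Set ℝ) (ξ : ℝ → ℤ → ℝ) : Prop :=
  (∀ t ∈ I, IsConfig p q (ξ t)) ∧
  ∀ k : ℤ, ∀ t ∈ I, HasDerivWithinAt (fun s => ξ s k)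
    (-(pd2 h (ξ t (k - 1)) (ξ t k) + pd1 h (ξ t k) (ξ t (k + 1)))) I t




section A
variable {h : ℝ → ℝ → ℝ} (hC2 : ContDiff ℝ 2 (Function.uncurry h))
include hC2

lemma slice1 (a b : ℝ) :
    HasDerivAt (fun s => h s b) (fderiv ℝ (Function.uncurry h) (a, b) (1, 0)) a := by
  have hd : HasFDerivAt (Function.uncurry h) (fderiv ℝ (Function.uncurry h) (a, b)) (a, b) :=
    ((hC2.differentiable (by norm_num)) (a, b)).hasFDerivAt
  have hc : HasDerivAt (fun s : ℝ => ((s, b) : ℝ × ℝ)) (1, 0) a := by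
    simpa using (hasDerivAt_id a).prodMk (hasDerivAt_const a b)
  exact hd.comp_hasDerivAt a hc

lemma slice2 (a b : ℝ) :
    HasDerivAt (fun s => h a s) (fderiv ℝ (Function.uncurry h) (a, b) (0, 1)) b := by
  have hd : HasFDerivAt (Function.uncurry h) (fderiv ℝ (Function.uncurry h) (a, b)) (a, b) :=
    ((hC2.differentiable (by norm_num)) (a, b)).hasFDerivAt
  have hc : HasDerivAt (fun s : ℝ => ((a, s) : ℝ × ℝ)) (0, 1) b := by
    simpa using (hasDerivAt_const b a).prodMk (hasDerivAt_id b)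
  exact hd.comp_hasDerivAt b hc

lemma pd1_eq (a b : ℝ) : pd1 h a b = fderiv ℝ (Function.uncurry h) (a, b) (1, 0) :=
  (slice1 hC2 a b).deriv

lemma pd2_eq (a b : ℝ) : pd2 h a b = fderiv ℝ (Function.uncurry h) (a, b) (0, 1) :=
  (slice2 hC2 a b).deriv

lemma Gdiff : Differentiable ℝ (fderiv ℝ (Function.uncurry h)) :=
  (hC2.fderiv_right (m := 1) (by norm_num)).differentiable one_ne_zero

lemma slice_pd2_left (a b : ℝ) :
    HasDerivAt (fun s => pd2 h s b)
      (fderiv ℝ (fderiv ℝ (Function.uncurry h)) (a, b) (1, 0) (0, 1)) a := by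
  have hd : HasFDerivAt (fderiv ℝ (Function.uncurry h))
      (fderiv ℝ (fderiv ℝ (Function.uncurry h)) (a, b)) (a, b) :=
    ((Gdiff hC2) (a, b)).hasFDerivAt
  have hc : HasDerivAt (fun s : ℝ => ((s, b) : ℝ × ℝ)) (1, 0) a := by
    simpa using (hasDerivAt_id a).prodMk (hasDerivAt_const a b)
  have h1 : HasDerivAt (fun s : ℝ => fderiv ℝ (Function.uncurry h) (s, b))
      (fderiv ℝ (fderiv ℝ (Function.uncurry h)) (a, b) (1, 0)) a :=
    hd.comp_hasDerivAt a hc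
  have h2 := h1.clm_apply (hasDerivAt_const a ((0 : ℝ), (1 : ℝ)))
  simp only [add_zero, map_zero] at h2
  have he : (fun s : ℝ => pd2 h s b) = fun s => fderiv ℝ (Function.uncurry h) (s, b) (0, 1) :=
    funext fun s => pd2_eq hC2 s b
  rw [he]
  exact h2

lemma slice_pd1_right (a b : ℝ) :
    HasDerivAt (fun s => pd1 h a s)
      (fderiv ℝ (fderiv ℝ (Function.uncurry h)) (a, b) (0, 1) (1, 0)) b := by
  have hd : HasFDerivAt (fderiv ℝ (Function.uncurry h))
      (fderiv ℝ (fderiv ℝ (Function.uncurry h)) (a, b)) (a, b) :=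
    ((Gdiff hC2) (a, b)).hasFDerivAt
  have hc : HasDerivAt (fun s : ℝ => ((a, s) : ℝ × ℝ)) (0, 1) b := by
    simpa using (hasDerivAt_const b a).prodMk (hasDerivAt_id b)
  have h1 : HasDerivAt (fun s : ℝ => fderiv ℝ (Function.uncurry h) (a, s))
      (fderiv ℝ (fderiv ℝ (Function.uncurry h)) (a, b) (0, 1)) b :=
    hd.comp_hasDerivAt b hc
  have h2 := h1.clm_apply (hasDerivAt_const b ((1 : ℝ), (0 : ℝ)))
  simp only [add_zero, map_zero] at h2
  have he : (fun s : ℝ => pd1 h a s) = fun s => fderiv ℝ (Function.uncurry h) (a, s) (1, 0) :=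
    funext fun s => pd1_eq hC2 a s
  rw [he]
  exact h2

lemma pd12_eq (a b : ℝ) :
    pd12 h a b = fderiv ℝ (fderiv ℝ (Function.uncurry h)) (a, b) (1, 0) (0, 1) :=
  (slice_pd2_left hC2 a b).deriv

lemma pd1_anti (htwist : ∀ a b : ℝ, pd12 h a b < 0) (a : ℝ) :
    StrictAnti (fun s => pd1 h a s) := by
  apply strictAnti_of_deriv_neg
  intro b
  rw [(slice_pd1_right hC2 a b).deriv]
  have hsymm := second_derivative_symmetric
    (f := Function.uncurry h) (f' := fderiv ℝ (Function.uncurry h))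
    (fun y => ((hC2.differentiable (by norm_num)) y).hasFDerivAt)
    ((Gdiff hC2 (a, b)).hasFDerivAt) ((0:ℝ), (1:ℝ)) ((1:ℝ), (0:ℝ))
  rw [hsymm, ← pd12_eq hC2]
  exact htwist a b

omit hC2 in
lemma pd2_anti (htwist : ∀ a b : ℝ, pd12 h a b < 0) (b : ℝ) :
    StrictAnti (fun s => pd2 h s b) :=
  strictAnti_of_deriv_neg fun a => htwist a b

end A


section B
variable {h : ℝ → ℝ → ℝ} (hC2 : ContDiff ℝ 2 (Function.uncurry h))
  {C : ℝ} (hC : ∀ v : ℝ × ℝ, ‖iteratedFDeriv ℝ 2 (Function.uncurry h) v‖ ≤ C)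
include hC2 hC

omit hC2 in
lemma D2_bound (v : ℝ × ℝ) : ‖fderiv ℝ (fderiv ℝ (Function.uncurry h)) v‖ ≤ C := by
  have hC0 : 0 ≤ C := le_trans (norm_nonneg _) (hC 0)
  apply ContinuousLinearMap.opNorm_le_bound _ hC0
  intro w
  apply ContinuousLinearMap.opNorm_le_bound _ (mul_nonneg hC0 (norm_nonneg _))
  intro w'
  have he := iteratedFDeriv_two_apply (𝕜 := ℝ) (Function.uncurry h) v ![w, w']
  have hm0 : (![w, w'] : Fin 2 → ℝ × ℝ) 0 = w := rfl
  have hm1 : (![w, w'] : Fin 2 → ℝ × ℝ) 1 = w' := rfl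
  rw [hm0, hm1] at he
  rw [← he]
  calc ‖iteratedFDeriv ℝ 2 (Function.uncurry h) v ![w, w']‖
      ≤ ‖iteratedFDeriv ℝ 2 (Function.uncurry h) v‖ * ∏ i, ‖(![w, w'] : Fin 2 → ℝ × ℝ) i‖ :=
        ContinuousMultilinearMap.le_opNorm _ _
    _ ≤ C * (‖w‖ * ‖w'‖) := by
        rw [Fin.prod_univ_two, hm0, hm1]
        exact mul_le_mul_of_nonneg_right (hC v) (by positivity)
    _ = C * ‖w‖ * ‖w'‖ := by ring

lemma G_lip (v w : ℝ × ℝ) :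
    ‖fderiv ℝ (Function.uncurry h) v - fderiv ℝ (Function.uncurry h) w‖ ≤ C * ‖v - w‖ := by
  have := Convex.norm_image_sub_le_of_norm_fderiv_le
    (f := fderiv ℝ (Function.uncurry h)) (C := C) (s := Set.univ)
    (fun x _ => ((hC2.fderiv_right (m := 1) (by norm_num)).differentiable one_ne_zero) x)
    (fun x _ => D2_bound hC x) convex_univ (Set.mem_univ w) (Set.mem_univ v)
  exact this

lemma pd1_diag (a b s : ℝ) : |pd1 h (a + s) (b + s) - pd1 h a b| ≤ C * |s| := by
  rw [pd1_eq hC2, pd1_eq hC2]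
  have he : fderiv ℝ (Function.uncurry h) (a + s, b + s) (1, 0)
      - fderiv ℝ (Function.uncurry h) (a, b) (1, 0)
      = (fderiv ℝ (Function.uncurry h) (a + s, b + s)
        - fderiv ℝ (Function.uncurry h) (a, b)) ((1 : ℝ), (0 : ℝ)) := rfl
  rw [← Real.norm_eq_abs, he]
  calc ‖(fderiv ℝ (Function.uncurry h) (a + s, b + s)
        - fderiv ℝ (Function.uncurry h) (a, b)) ((1 : ℝ), (0 : ℝ))‖
      ≤ ‖fderiv ℝ (Function.uncurry h) (a + s, b + s)
        - fderiv ℝ (Function.uncurry h) (a, b)‖ * ‖((1 : ℝ), (0 : ℝ))‖ :=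
        ContinuousLinearMap.le_opNorm _ _
    _ ≤ (C * ‖((a + s, b + s) : ℝ × ℝ) - (a, b)‖) * ‖((1 : ℝ), (0 : ℝ))‖ := by
        apply mul_le_mul_of_nonneg_right (G_lip hC2 hC _ _) (norm_nonneg _)
    _ = C * |s| := by
        have h1 : ‖((1 : ℝ), (0 : ℝ))‖ = 1 := by
          simp [Prod.norm_def]
        have h2 : ‖((a + s, b + s) : ℝ × ℝ) - (a, b)‖ = |s| := by
          have : ((a + s, b + s) : ℝ × ℝ) - (a, b) = (s, s) := by
            simp [Prod.ext_iff]
          rw [this]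
          simp [Prod.norm_def, Real.norm_eq_abs]
        rw [h1, h2]; ring

lemma pd2_diag (a b s : ℝ) : |pd2 h (a + s) (b + s) - pd2 h a b| ≤ C * |s| := by
  rw [pd2_eq hC2, pd2_eq hC2]
  have he : fderiv ℝ (Function.uncurry h) (a + s, b + s) (0, 1)
      - fderiv ℝ (Function.uncurry h) (a, b) (0, 1)
      = (fderiv ℝ (Function.uncurry h) (a + s, b + s)
        - fderiv ℝ (Function.uncurry h) (a, b)) ((0 : ℝ), (1 : ℝ)) := rfl
  rw [← Real.norm_eq_abs, he]
  calc ‖(fderiv ℝ (Function.uncurry h) (a + s, b + s)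
        - fderiv ℝ (Function.uncurry h) (a, b)) ((0 : ℝ), (1 : ℝ))‖
      ≤ ‖fderiv ℝ (Function.uncurry h) (a + s, b + s)
        - fderiv ℝ (Function.uncurry h) (a, b)‖ * ‖((0 : ℝ), (1 : ℝ))‖ :=
        ContinuousLinearMap.le_opNorm _ _
    _ ≤ (C * ‖((a + s, b + s) : ℝ × ℝ) - (a, b)‖) * ‖((0 : ℝ), (1 : ℝ))‖ := by
        apply mul_le_mul_of_nonneg_right (G_lip hC2 hC _ _) (norm_nonneg _)
    _ = C * |s| := by
        have h1 : ‖((0 : ℝ), (1 : ℝ))‖ = 1 := by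
          simp [Prod.norm_def]
        have h2 : ‖((a + s, b + s) : ℝ × ℝ) - (a, b)‖ = |s| := by
          have : ((a + s, b + s) : ℝ × ℝ) - (a, b) = (s, s) := by
            simp [Prod.ext_iff]
          rw [this]
          simp [Prod.norm_def, Real.norm_eq_abs]
        rw [h1, h2]; ring

end B


section C

lemma comparison_ge (q : ℕ) (hq : 0 < q) (F : ℤ → ℝ → ℝ → ℝ → ℝ) (L : ℝ)
    (z : ℤ → ℝ) (hz : ∀ k, F k (z (k - 1)) (z k) (z (k + 1)) = 0)
    (hmonoa : ∀ (k : ℤ) (a a' b c : ℝ), a ≤ a' → F k a b c ≤ F k a' b c)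
    (hmonoc : ∀ (k : ℤ) (a b c c' : ℝ), c ≤ c' → F k a b c ≤ F k a b c')
    (hLip : ∀ (k : ℤ) (m : ℝ), 0 ≤ m →
      -(L * m) ≤ F k (z (k - 1) - m) (z k - m) (z (k + 1) - m))
    (ξ : ℝ → ℤ → ℝ)
    (hperi : ∀ (t : ℝ) (k : ℤ), ξ t (k + (q : ℤ)) - z (k + (q : ℤ)) = ξ t k - z k)
    (hsol : ∀ (k : ℤ) (t : ℝ),
      HasDerivAt (fun s => ξ s k) (F k (ξ t (k - 1)) (ξ t k) (ξ t (k + 1))) t)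
    (t0 : ℝ) (h0 : ∀ k, z k ≤ ξ t0 k) :
    ∀ t, t0 ≤ t → ∀ k, z k ≤ ξ t k := by
  -- periodic reduction
  have hper' : ∀ (t : ℝ) (k m : ℤ), ξ t (k + m * q) - z (k + m * q) = ξ t k - z k := by
    intro t k m
    induction m using Int.induction_on with
    | zero => simp
    | succ n ih =>
        have h1 := hperi t (k + (n : ℤ) * q)
        have h2 : k + ((n : ℤ) + 1) * q = k + (n : ℤ) * q + q := by ring
        rw [h2, h1, ih]
    | pred n ih =>
        have h1 := hperi t (k + (-(n : ℤ) - 1) * q)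
        have h2 : k + (-(n : ℤ) - 1) * q + (q : ℤ) = k + (-(n : ℤ)) * q := by ring
        rw [h2] at h1
        rw [← ih, h1]
  have hred : ∀ k : ℤ, ∃ j : ℕ, j < q ∧ ∀ t, ξ t k - z k = ξ t (j : ℤ) - z (j : ℤ) := by
    intro k
    have h1 : (0 : ℤ) ≤ k % (q : ℤ) := Int.emod_nonneg k (by exact_mod_cast hq.ne')
    have h2 : k % (q : ℤ) < (q : ℤ) := Int.emod_lt_of_pos k (by exact_mod_cast hq)
    refine ⟨(k % (q : ℤ)).toNat, by omega, ?_⟩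
    intro t
    have h3 : (((k % (q : ℤ)).toNat : ℤ)) = k % (q : ℤ) := Int.toNat_of_nonneg h1
    rw [h3]
    have h4 := hper' t (k % (q : ℤ)) (k / (q : ℤ))
    have h5 : k % (q : ℤ) + k / (q : ℤ) * (q : ℤ) = k := by
      rw [mul_comm]; exact Int.emod_add_mul_ediv k q
    rw [h5] at h4
    exact h4
  have hcont : ∀ k : ℤ, Continuous fun t => ξ t k := by
    intro k
    exact continuous_iff_continuousAt.mpr fun t => (hsol k t).continuousAt
  intro t1 ht1
  set K : ℝ := |L| + 1 with hK
  have hKpos : (0 : ℝ) < K := by positivity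
  set φ : ℝ → ℝ → ℝ := fun ε t => ε * Real.exp (2 * K * (t - t0)) with hφdef
  have key : ∀ ε : ℝ, 0 < ε → ∀ t ∈ Set.Icc t0 t1, ∀ j : ℕ, j < q →
      -(φ ε t) < ξ t (j : ℤ) - z (j : ℤ) := by
    intro ε hε
    by_contra hcon
    push_neg at hcon
    obtain ⟨tb, htb, jb, hjb, hjble⟩ := hcon
    have hφcont : Continuous (φ ε) := by
      apply continuous_const.mul
      exact Real.continuous_exp.comp (by fun_prop)
    set S : Set ℝ := Set.Icc t0 t1 ∩
      ⋃ j ∈ Finset.range q, {t | ξ t (j : ℤ) - z (j : ℤ) + φ ε t ≤ 0} with hS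
    have hSclosed : IsClosed S := by
      apply isClosed_Icc.inter
      apply Set.Finite.isClosed_biUnion (Finset.finite_toSet _)
      intro j _
      exact isClosed_le (by fun_prop) continuous_const
    have hSne : S.Nonempty := by
      refine ⟨tb, htb, ?_⟩
      apply Set.mem_biUnion (Finset.mem_coe.mpr (Finset.mem_range.mpr hjb))
      simp only [Set.mem_setOf_eq]
      linarith
    have hSbdd : BddBelow S := ⟨t0, fun t ht => ht.1.1⟩
    set ts : ℝ := sInf S with hts
    have htsS : ts ∈ S := hSclosed.csInf_mem hSne hSbdd
    obtain ⟨⟨hts0, hts1⟩, humem⟩ := htsS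
    obtain ⟨j0, hj0mem, hle0⟩ := Set.mem_iUnion₂.mp humem
    have hj0q : j0 < q := Finset.mem_range.mp hj0mem
    have hle0' : ξ ts (j0 : ℤ) - z (j0 : ℤ) + φ ε ts ≤ 0 := hle0
    have hφt0 : φ ε t0 = ε := by simp [hφdef]
    have hts0lt : t0 < ts := by
      rcases lt_or_eq_of_le hts0 with hlt | heq
      · exact hlt
      · exfalso
        rw [← heq] at hle0'
        rw [hφt0] at hle0'
        have := h0 (j0 : ℤ)
        linarith
    have hbefore : ∀ t, t0 ≤ t → t < ts → ∀ j : ℕ, j < q →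
        0 < ξ t (j : ℤ) - z (j : ℤ) + φ ε t := by
      intro t htt0 htlt j hj
      by_contra hc
      push_neg at hc
      have htS : t ∈ S := by
        refine ⟨⟨htt0, le_trans htlt.le hts1⟩, ?_⟩
        exact Set.mem_biUnion (Finset.mem_coe.mpr (Finset.mem_range.mpr hj)) hc
      have := csInf_le hSbdd htS
      rw [← hts] at this
      linarith
    have hbefore' : ∀ t, t0 ≤ t → t < ts → ∀ k : ℤ, 0 < ξ t k - z k + φ ε t := by
      intro t htt0 htlt k
      obtain ⟨j, hjq, hjeq⟩ := hred k
      rw [hjeq t]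
      exact hbefore t htt0 htlt j hjq
    have hatstar : ∀ k : ℤ, 0 ≤ ξ ts k - z k + φ ε ts := by
      intro k
      have hmem : ts ∈ closure (Set.Ico t0 ts) := by
        rw [closure_Ico (ne_of_lt hts0lt)]
        exact ⟨hts0lt.le, le_rfl⟩
      have hne : (nhdsWithin ts (Set.Ico t0 ts)).NeBot :=
        mem_closure_iff_nhdsWithin_neBot.mp hmem
      have hc : ContinuousAt (fun t => ξ t k - z k + φ ε t) ts := by
        exact (((hcont k).sub continuous_const).add hφcont).continuousAt
      have hcw : Filter.Tendsto (fun t => ξ t k - z k + φ ε t)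
          (nhdsWithin ts (Set.Ico t0 ts)) (nhds (ξ ts k - z k + φ ε ts)) :=
        (hc.continuousWithinAt (s := Set.Ico t0 ts)).tendsto
      apply ge_of_tendsto hcw
      filter_upwards [self_mem_nhdsWithin] with t ht
      exact (hbefore' t ht.1 ht.2 k).le
    have heq0 : ξ ts (j0 : ℤ) - z (j0 : ℤ) + φ ε ts = 0 :=
      le_antisymm hle0' (hatstar (j0 : ℤ))
    have hφpos : 0 < φ ε ts := by
      simp only [hφdef]
      positivity
    -- derivative of the gap function at ts
    have hφd : HasDerivAt (φ ε) (ε * (Real.exp (2 * K * (ts - t0)) * (2 * K))) ts := by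
      have h1 : HasDerivAt (fun t : ℝ => 2 * K * (t - t0)) (2 * K) ts := by
        simpa using ((hasDerivAt_id ts).sub_const t0).const_mul (2 * K)
      exact (h1.exp).const_mul ε
    set Fv : ℝ := F (j0 : ℤ) (ξ ts ((j0 : ℤ) - 1)) (ξ ts (j0 : ℤ)) (ξ ts ((j0 : ℤ) + 1)) with hFv
    have hgder : HasDerivAt (fun t => ξ t (j0 : ℤ) - z (j0 : ℤ) + φ ε t)
        (Fv + ε * (Real.exp (2 * K * (ts - t0)) * (2 * K))) ts :=
      ((hsol (j0 : ℤ) ts).sub_const _).add hφd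
    -- lower bound on Fv
    have hxi0 : ξ ts (j0 : ℤ) = z (j0 : ℤ) - φ ε ts := by linarith
    have hFlow : -(L * φ ε ts) ≤ Fv := by
      have s1 : F (j0 : ℤ) (z ((j0 : ℤ) - 1) - φ ε ts) (z (j0 : ℤ) - φ ε ts)
          (z ((j0 : ℤ) + 1) - φ ε ts)
          ≤ F (j0 : ℤ) (ξ ts ((j0 : ℤ) - 1)) (z (j0 : ℤ) - φ ε ts)
            (z ((j0 : ℤ) + 1) - φ ε ts) := by
        apply hmonoa
        have := hatstar ((j0 : ℤ) - 1)
        linarith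
      have s2 : F (j0 : ℤ) (ξ ts ((j0 : ℤ) - 1)) (z (j0 : ℤ) - φ ε ts)
          (z ((j0 : ℤ) + 1) - φ ε ts)
          ≤ F (j0 : ℤ) (ξ ts ((j0 : ℤ) - 1)) (z (j0 : ℤ) - φ ε ts)
            (ξ ts ((j0 : ℤ) + 1)) := by
        apply hmonoc
        have := hatstar ((j0 : ℤ) + 1)
        linarith
      have s0 := hLip (j0 : ℤ) (φ ε ts) hφpos.le
      rw [hFv, hxi0]
      linarith
    have hderpos : 0 < Fv + ε * (Real.exp (2 * K * (ts - t0)) * (2 * K)) := by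
      have he : φ ε ts = ε * Real.exp (2 * K * (ts - t0)) := rfl
      have hLK : L ≤ |L| := le_abs_self L
      nlinarith [hφpos, hFlow]
    -- left slope nonpositive
    have hslope := hasDerivAt_iff_tendsto_slope.mp hgder
    have hmono : nhdsWithin ts (Set.Ico t0 ts) ≤ nhdsWithin ts {ts}ᶜ := by
      apply nhdsWithin_mono
      intro t ht
      exact ne_of_lt ht.2
    have hne : (nhdsWithin ts (Set.Ico t0 ts)).NeBot := by
      apply mem_closure_iff_nhdsWithin_neBot.mp
      rw [closure_Ico (ne_of_lt hts0lt)]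
      exact ⟨hts0lt.le, le_rfl⟩
    have hd_le : Fv + ε * (Real.exp (2 * K * (ts - t0)) * (2 * K)) ≤ 0 := by
      apply le_of_tendsto (hslope.mono_left hmono)
      filter_upwards [self_mem_nhdsWithin] with t ht
      have hgt : 0 ≤ (fun t => ξ t (j0 : ℤ) - z (j0 : ℤ) + φ ε t) t :=
        (hbefore' t ht.1 ht.2 (j0 : ℤ)).le
      rw [slope_def_field]
      apply div_nonpos_of_nonneg_of_nonpos
      · rw [heq0]; simpa using hgt
      · linarith [ht.2]
    linarith
  -- conclude
  intro k
  by_contra hc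
  push_neg at hc
  obtain ⟨j, hjq, hjeq⟩ := hred k
  set E : ℝ := Real.exp (2 * K * (t1 - t0)) with hE
  have hEpos : 0 < E := Real.exp_pos _
  have hεpos : 0 < (z k - ξ t1 k) / (2 * E) := by
    apply div_pos (by linarith) (by linarith)
  have hk := key _ hεpos t1 ⟨ht1, le_rfl⟩ j hjq
  rw [← hjeq t1] at hk
  have : φ ((z k - ξ t1 k) / (2 * E)) t1 = (z k - ξ t1 k) / 2 := by
    simp only [hφdef, ← hE]
    field_simp
  rw [this] at hk
  linarith

lemma comparison_le (q : ℕ) (hq : 0 < q) (F : ℤ → ℝ → ℝ → ℝ → ℝ) (L : ℝ)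
    (z : ℤ → ℝ) (hz : ∀ k, F k (z (k - 1)) (z k) (z (k + 1)) = 0)
    (hmonoa : ∀ (k : ℤ) (a a' b c : ℝ), a ≤ a' → F k a b c ≤ F k a' b c)
    (hmonoc : ∀ (k : ℤ) (a b c c' : ℝ), c ≤ c' → F k a b c ≤ F k a b c')
    (hLip : ∀ (k : ℤ) (m : ℝ), 0 ≤ m →
      F k (z (k - 1) + m) (z k + m) (z (k + 1) + m) ≤ L * m)
    (ξ : ℝ → ℤ → ℝ)
    (hperi : ∀ (t : ℝ) (k : ℤ), ξ t (k + (q : ℤ)) - z (k + (q : ℤ)) = ξ t k - z k)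
    (hsol : ∀ (k : ℤ) (t : ℝ),
      HasDerivAt (fun s => ξ s k) (F k (ξ t (k - 1)) (ξ t k) (ξ t (k + 1))) t)
    (t0 : ℝ) (h0 : ∀ k, ξ t0 k ≤ z k) :
    ∀ t, t0 ≤ t → ∀ k, ξ t k ≤ z k := by
  have main := comparison_ge q hq (fun k a b c => -(F k (-a) (-b) (-c))) L
    (fun k => -(z k))
    (by intro k; simp only [neg_neg]; rw [hz k]; ring)
    (by intro k a a' b c hle
        simp only [neg_le_neg_iff]
        exact hmonoa k (-a') (-a) (-b) (-c) (by linarith))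
    (by intro k a b c c' hle
        simp only [neg_le_neg_iff]
        exact hmonoc k (-a) (-b) (-c') (-c) (by linarith))
    (by intro k m hm
        show -(L * m) ≤ -F k (-(-z (k - 1) - m)) (-(-z k - m)) (-(-z (k + 1) - m))
        have he1 : -(-z (k - 1) - m) = z (k - 1) + m := by ring
        have he2 : -(-z k - m) = z k + m := by ring
        have he3 : -(-z (k + 1) - m) = z (k + 1) + m := by ring
        rw [he1, he2, he3]
        linarith [hLip k m hm])
    (fun t k => -(ξ t k))
    (by intro t k
        show -ξ t (k + (q : ℤ)) - -z (k + (q : ℤ)) = -ξ t k - -z k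
        have := hperi t k
        linarith)
    (by intro k t
        have := (hsol k t).fun_neg
        simpa using this)
    t0 (fun k => by simpa using h0 k)
  intro t ht k
  have := main t ht k
  simpa using this

end C



section D

lemma config_shift {p : ℤ} {q : ℕ} {x : ℤ → ℝ} (hx : IsConfig p q x) :
    ∀ (n m : ℤ), x (n + m * q) = x n + m * p := by
  intro n m
  induction m using Int.induction_on with
  | zero => simp
  | succ j ih =>
      have h1 := hx (n + (j : ℤ) * q)
      have h2 : n + ((j : ℤ) + 1) * q = n + (j : ℤ) * q + (q : ℤ) := by ring
      rw [h2, h1, ih]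
      push_cast
      ring
  | pred j ih =>
      have h1 := hx (n + (-(j : ℤ) - 1) * q)
      have h2 : n + (-(j : ℤ) - 1) * q + (q : ℤ) = n + (-(j : ℤ)) * q := by ring
      rw [h2] at h1
      have h3 : x (n + (-(j : ℤ) - 1) * q) = x (n + (-(j : ℤ)) * q) - p := by
        rw [h1]; push_cast; ring
      rw [h3, ih]
      push_cast
      ring

lemma config_diff_red {p : ℤ} {q : ℕ} (hq : 0 < q) {a b : ℤ → ℝ}
    (ha : IsConfig p q a) (hb : IsConfig p q b) (k : ℤ) :
    ∃ j : ℕ, j < q ∧ a k - b k = a (j : ℤ) - b (j : ℤ) := by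
  have h1 : (0 : ℤ) ≤ k % (q : ℤ) := Int.emod_nonneg k (by exact_mod_cast hq.ne')
  have h2 : k % (q : ℤ) < (q : ℤ) := Int.emod_lt_of_pos k (by exact_mod_cast hq)
  refine ⟨(k % (q : ℤ)).toNat, by omega, ?_⟩
  have h3 : (((k % (q : ℤ)).toNat : ℤ)) = k % (q : ℤ) := Int.toNat_of_nonneg h1
  rw [h3]
  have h5 : k % (q : ℤ) + k / (q : ℤ) * (q : ℤ) = k := by
    rw [mul_comm]; exact Int.emod_add_mul_ediv k q
  have ha' := config_shift ha (k % (q : ℤ)) (k / (q : ℤ))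
  have hb' := config_shift hb (k % (q : ℤ)) (k / (q : ℤ))
  rw [h5] at ha' hb'
  rw [ha', hb']
  ring

lemma stationary_propagate {h : ℝ → ℝ → ℝ}
    (hpd2anti : ∀ b : ℝ, StrictAnti fun a => pd2 h a b)
    (hpd1anti : ∀ a : ℝ, StrictAnti fun b => pd1 h a b)
    {z w : ℤ → ℝ} (hzs : Stationary h z) (hws : Stationary h w)
    (hle : ∀ k, z k ≤ w k) (k0 : ℤ) (heq : z k0 = w k0) : ∀ k, z k = w k := by
  have step : ∀ k : ℤ, z k = w k → z (k + 1) = w (k + 1) ∧ z (k - 1) = w (k - 1) := by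
    intro k hk
    have e1 := hzs k
    have e2 := hws k
    rw [← hk] at e2
    have hA : pd2 h (w (k - 1)) (z k) ≤ pd2 h (z (k - 1)) (z k) :=
      (hpd2anti (z k)).antitone (hle (k - 1))
    have hB : pd1 h (z k) (w (k + 1)) ≤ pd1 h (z k) (z (k + 1)) :=
      (hpd1anti (z k)).antitone (hle (k + 1))
    constructor
    · by_contra hne
      have hlt : z (k + 1) < w (k + 1) := lt_of_le_of_ne (hle _) hne
      have := (hpd1anti (z k)) hlt
      simp only [] at this
      linarith
    · by_contra hne
      have hlt : z (k - 1) < w (k - 1) := lt_of_le_of_ne (hle _) hne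
      have := (hpd2anti (z k)) hlt
      simp only [] at this
      linarith
  intro k
  exact Int.inductionOn' k k0 heq (fun n _ ih => (step n ih).1) (fun n _ ih => (step n ih).2)

end D

/-- Proposition 2.3: if the minimaximizer y (with x ≺ y ≺ x') is connected to the
minimizers x and x' by heteroclinic gradient-flow orbits, then no stationary state
other than the endpoints lies in the order intervals [x,y] and [y,x']. -/
theorem no_stationary_in_order_intervals
    (p : ℤ) (q : ℕ) (hq : 0 < q) (hpq : IsCoprime p (q : ℤ))
    (h : ℝ → ℝ → ℝ) (hC2 : ContDiff ℝ 2 (Function.uncurry h))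
    (htwist : ∀ a b : ℝ, pd12 h a b < 0)
    (hper : ∀ a b : ℝ, h (a + 1) (b + 1) = h a b)
    (hbd : ∃ C : ℝ, ∀ v : ℝ × ℝ, ‖iteratedFDeriv ℝ 2 (Function.uncurry h) v‖ ≤ C)
    (x y x' : ℤ → ℝ)
    (hx : IsConfig p q x) (hy : IsConfig p q y) (hx' : IsConfig p q x')
    (hxs : Stationary h x) (hys : Stationary h y) (hx's : Stationary h x')
    (hxy : ∀ k : ℤ, x k < y k) (hyx' : ∀ k : ℤ, y k < x' k)
    (γm γp : ℝ → ℤ → ℝ)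
    (hγm : IsGradSol h p q Set.univ γm) (hγp : IsGradSol h p q Set.univ γp)
    (hγmBot : ∀ k : ℤ, Tendsto (fun t => γm t k) atBot (nhds (y k)))
    (hγmTop : ∀ k : ℤ, Tendsto (fun t => γm t k) atTop (nhds (x k)))
    (hγpBot : ∀ k : ℤ, Tendsto (fun t => γp t k) atBot (nhds (y k)))
    (hγpTop : ∀ k : ℤ, Tendsto (fun t => γp t k) atTop (nhds (x' k))) :
    (∀ z : ℤ → ℝ, IsConfig p q z → Stationary h z →
      (∀ k : ℤ, x k ≤ z k) → (∀ k : ℤ, z k ≤ y k) → z = x ∨ z = y) ∧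
    (∀ z : ℤ → ℝ, IsConfig p q z → Stationary h z →
      (∀ k : ℤ, y k ≤ z k) → (∀ k : ℤ, z k ≤ x' k) → z = y ∨ z = x') := by
  classical
  obtain ⟨C, hC⟩ := hbd
  have hC0 : (0 : ℝ) ≤ C := le_trans (norm_nonneg _) (hC 0)
  have hpd2anti : ∀ b : ℝ, StrictAnti fun a => pd2 h a b := pd2_anti htwist
  have hpd1anti : ∀ a : ℝ, StrictAnti fun b => pd1 h a b := pd1_anti hC2 htwist
  set F : ℤ → ℝ → ℝ → ℝ → ℝ := fun _ a b c => -(pd2 h a b + pd1 h b c) with hF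
  have hmonoa : ∀ (k : ℤ) (a a' b c : ℝ), a ≤ a' → F k a b c ≤ F k a' b c := by
    intro k a a' b c hle
    have h1 : pd2 h a' b ≤ pd2 h a b := (hpd2anti b).antitone hle
    show -(pd2 h a b + pd1 h b c) ≤ -(pd2 h a' b + pd1 h b c)
    linarith
  have hmonoc : ∀ (k : ℤ) (a b c c' : ℝ), c ≤ c' → F k a b c ≤ F k a b c' := by
    intro k a b c c' hle
    have h1 : pd1 h b c' ≤ pd1 h b c := (hpd1anti b).antitone hle
    show -(pd2 h a b + pd1 h b c) ≤ -(pd2 h a b + pd1 h b c')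
    linarith
  have hdiag : ∀ zz : ℤ → ℝ, Stationary h zz → ∀ (k : ℤ) (s : ℝ),
      |(-(pd2 h (zz (k - 1) + s) (zz k + s) + pd1 h (zz k + s) (zz (k + 1) + s)))|
        ≤ 2 * C * |s| := by
    intro zz hzz k s
    have h1 := pd2_diag hC2 hC (zz (k - 1)) (zz k) s
    have h2 := pd1_diag hC2 hC (zz k) (zz (k + 1)) s
    have h0 := hzz k
    rw [abs_le] at h1 h2 ⊢
    constructor <;> [skip; skip] <;> · obtain ⟨h1a, h1b⟩ := h1; obtain ⟨h2a, h2b⟩ := h2; linarith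
  have hstatF : ∀ zz : ℤ → ℝ, Stationary h zz →
      ∀ k : ℤ, F k (zz (k - 1)) (zz k) (zz (k + 1)) = 0 := by
    intro zz hzz k
    show -(pd2 h (zz (k - 1)) (zz k) + pd1 h (zz k) (zz (k + 1))) = 0
    rw [hzz k]; ring
  have hLipGe : ∀ zz : ℤ → ℝ, Stationary h zz → ∀ (k : ℤ) (m : ℝ), 0 ≤ m →
      -(2 * C * m) ≤ F k (zz (k - 1) - m) (zz k - m) (zz (k + 1) - m) := by
    intro zz hzz k m hm
    have := hdiag zz hzz k (-m)
    rw [show |(-m)| = m by rw [abs_neg, abs_of_nonneg hm]] at this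
    have h1 := (abs_le.mp this).1
    show -(2 * C * m) ≤ -(pd2 h (zz (k - 1) - m) (zz k - m) + pd1 h (zz k - m) (zz (k + 1) - m))
    have e1 : zz (k - 1) - m = zz (k - 1) + -m := by ring
    have e2 : zz k - m = zz k + -m := by ring
    have e3 : zz (k + 1) - m = zz (k + 1) + -m := by ring
    rw [e1, e2, e3]
    linarith
  have hLipLe : ∀ zz : ℤ → ℝ, Stationary h zz → ∀ (k : ℤ) (m : ℝ), 0 ≤ m →
      F k (zz (k - 1) + m) (zz k + m) (zz (k + 1) + m) ≤ 2 * C * m := by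
    intro zz hzz k m hm
    have := hdiag zz hzz k m
    rw [abs_of_nonneg hm] at this
    have h1 := (abs_le.mp this).2
    show -(pd2 h (zz (k - 1) + m) (zz k + m) + pd1 h (zz k + m) (zz (k + 1) + m)) ≤ 2 * C * m
    linarith
  constructor
  · -- interval [x, y]
    intro z hzc hzs2 hxz hzy
    by_contra hcon
    push_neg at hcon
    obtain ⟨hzx, hzy2⟩ := hcon
    have hzylt : ∀ k, z k < y k := by
      intro k
      rcases lt_or_eq_of_le (hzy k) with hlt | heq
      · exact hlt
      · exact absurd (funext (stationary_propagate hpd2anti hpd1anti hzs2 hys hzy k heq)) hzy2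
    have hxzlt : ∀ k, x k < z k := by
      intro k
      rcases lt_or_eq_of_le (hxz k) with hlt | heq
      · exact hlt
      · exact absurd
          (funext fun j => (stationary_propagate hpd2anti hpd1anti hxs hzs2 hxz k heq j).symm)
          hzx
    have hev : ∀ᶠ t in atBot, ∀ j ∈ Finset.range q, z (j : ℤ) < γm t (j : ℤ) :=
      (eventually_all_finset _).2 fun j _ => (hγmBot (j : ℤ)).eventually (lt_mem_nhds (hzylt (j : ℤ)))
    obtain ⟨T0, hT0⟩ := eventually_atBot.mp hev
    have h0 : ∀ k, z k ≤ γm T0 k := by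
      intro k
      obtain ⟨j, hjq, hjd⟩ := config_diff_red hq (hγm.1 T0 (Set.mem_univ T0)) hzc k
      have := hT0 T0 le_rfl j (Finset.mem_range.mpr hjq)
      linarith
    have hperi : ∀ (t : ℝ) (k : ℤ), γm t (k + (q : ℤ)) - z (k + (q : ℤ)) = γm t k - z k := by
      intro t k
      rw [hγm.1 t (Set.mem_univ t) k, hzc k]
      ring
    have hsolm : ∀ (k : ℤ) (t : ℝ),
        HasDerivAt (fun s => γm s k) (F k (γm t (k - 1)) (γm t k) (γm t (k + 1))) t := by
      intro k t
      have := hγm.2 k t (Set.mem_univ t)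
      rw [hasDerivWithinAt_univ] at this
      exact this
    have hcomp := comparison_ge q hq F (2 * C) z (hstatF z hzs2) hmonoa hmonoc
      (hLipGe z hzs2) γm hperi hsolm T0 h0
    have hfin : z 0 ≤ x 0 :=
      ge_of_tendsto (hγmTop 0) ((eventually_ge_atTop T0).mono fun t ht => hcomp t ht 0)
    exact absurd hfin (not_le.mpr (hxzlt 0))
  · -- interval [y, x']
    intro z hzc hzs2 hyz hzx'
    by_contra hcon
    push_neg at hcon
    obtain ⟨hzy2, hzx2⟩ := hcon
    have hyzlt : ∀ k, y k < z k := by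
      intro k
      rcases lt_or_eq_of_le (hyz k) with hlt | heq
      · exact hlt
      · exact absurd
          (funext fun j => (stationary_propagate hpd2anti hpd1anti hys hzs2 hyz k heq j).symm)
          hzy2
    have hzx'lt : ∀ k, z k < x' k := by
      intro k
      rcases lt_or_eq_of_le (hzx' k) with hlt | heq
      · exact hlt
      · exact absurd (funext (stationary_propagate hpd2anti hpd1anti hzs2 hx's hzx' k heq)) hzx2
    have hev : ∀ᶠ t in atBot, ∀ j ∈ Finset.range q, γp t (j : ℤ) < z (j : ℤ) :=
      (eventually_all_finset _).2 fun j _ => (hγpBot (j : ℤ)).eventually (gt_mem_nhds (hyzlt (j : ℤ)))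
    obtain ⟨T0, hT0⟩ := eventually_atBot.mp hev
    have h0 : ∀ k, γp T0 k ≤ z k := by
      intro k
      obtain ⟨j, hjq, hjd⟩ := config_diff_red hq (hγp.1 T0 (Set.mem_univ T0)) hzc k
      have := hT0 T0 le_rfl j (Finset.mem_range.mpr hjq)
      linarith
    have hperi : ∀ (t : ℝ) (k : ℤ), γp t (k + (q : ℤ)) - z (k + (q : ℤ)) = γp t k - z k := by
      intro t k
      rw [hγp.1 t (Set.mem_univ t) k, hzc k]
      ring
    have hsolp : ∀ (k : ℤ) (t : ℝ),
        HasDerivAt (fun s => γp s k) (F k (γp t (k - 1)) (γp t k) (γp t (k + 1))) t := by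
      intro k t
      have := hγp.2 k t (Set.mem_univ t)
      rw [hasDerivWithinAt_univ] at this
      exact this
    have hcomp := comparison_le q hq F (2 * C) z (hstatF z hzs2) hmonoa hmonoc
      (hLipLe z hzs2) γp hperi hsolp T0 h0
    have hfin : x' 0 ≤ z 0 :=
      le_of_tendsto (hγpTop 0) ((eventually_ge_atTop T0).mono fun t ht => hcomp t ht 0)
    exact absurd hfin (not_le.mpr (hzx'lt 0))
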